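/- arXiv:2506.16470 — 3 statements merged into one kernel-verified Lean document; each statement's English description precedes it below -/
import Mathlib

section
/- Let T > 0, let y : [0,T] → ℝ^{N_h} be twice continuously differentiable, let f : [0,T] × ℝ^{N_h} → ℝ^{N_h} satisfy y′(t) = f(t, y(t)) for all t ∈ [0,T] and be L-Lipschitz continuous in its second argument (‖f(t,x) − f(t,w)‖ ≤ L‖x − w‖ for all t, x, w). Let 0 ≤ t_n < t_{n+1} ≤ T with Δt := t_{n+1} − t_n, and let Ṽ be a real N_h × N matrix with orthonormal columns such that Ṽ Ṽᵀ y(t_n) = y(t_n). Define the local truncation error τ := (y(t_{n+1}) − y(t_n))/Δt − f(t_{n+1}, Ṽ Ṽᵀ y(t_{n+1})). Then ‖τ‖ ≤ Δt · L · max_{t∈[0,T]} ‖y′(t)‖ + (1/2)(Δt + L·Δt²) · max_{t∈[0,T]} ‖y″(t)‖. In particular the truncation error is O(Δt), so the IMEX--RB scheme is consistent of order 1. -/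
/-!
The truncation error splits as
`(slope y tₙ tₙ₊₁ - y′(tₙ₊₁)) + (f(tₙ₊₁, y(tₙ₊₁)) - f(tₙ₊₁, ṼṼᵀ y(tₙ₊₁)))`.
The first term is the consistency error of backward Euler, at most `½ Δt max ‖y″‖` by a
second-order Taylor estimate around `tₙ₊₁`. For the second, `ṼṼᵀ` is an orthogonal projection
fixing `y(tₙ)`, so it moves `y(tₙ₊₁)` by at most `‖y(tₙ₊₁) - y(tₙ)‖ ≤ Δt max ‖y′‖`, and the
Lipschitz bound on `f` costs a factor `L`.
-/

open Set Matrix WithLp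

theorem LinearMap.IsSymmetric.norm_sub_apply_le {𝕜 E : Type*} [RCLike 𝕜] [NormedAddCommGroup E]
    [InnerProductSpace 𝕜 E] {P : E →ₗ[𝕜] E} (hP : P.IsSymmetric) (hPP : IsIdempotentElem P)
    (x : E) {b : E} (hb : P b = b) : ‖x - P x‖ ≤ ‖x - b‖ := by
  have hPx : P (x - P x) = 0 := by
    rw [map_sub, ← Module.End.mul_apply, hPP.eq, sub_self]
  have horth : inner 𝕜 (x - P x) (P (x - b)) = 0 := by
    rw [← hP, hPx, inner_zero_left]
  have hsplit : (x - P x) + P (x - b) = x - b := by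
    rw [map_sub, hb]; abel
  have pythagoras := norm_add_sq_eq_norm_sq_add_norm_sq_of_inner_eq_zero _ _ horth
  rw [hsplit] at pythagoras
  nlinarith [norm_nonneg (x - b), norm_nonneg (x - P x), mul_self_nonneg ‖P (x - b)‖]

section Projection

variable {m n : Type*} [Fintype m] [Fintype n] [DecidableEq n]

theorem Matrix.isIdempotentElem_mul_transpose {V : Matrix m n ℝ} (hV : Vᵀ * V = 1) :
    IsIdempotentElem (V * Vᵀ) := by
  rw [IsIdempotentElem, Matrix.mul_assoc, ← Matrix.mul_assoc Vᵀ, hV, Matrix.one_mul]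

theorem Matrix.norm_sub_mulVec_transpose_mulVec_le [DecidableEq m] {V : Matrix m n ℝ}
    (hV : Vᵀ * V = 1) (x b : EuclideanSpace ℝ m) (hb : V *ᵥ (Vᵀ *ᵥ b) = b) :
    ‖x - toLp 2 (V *ᵥ (Vᵀ *ᵥ x))‖ ≤ ‖x - b‖ := by
  have hsymm : (toEuclideanLin (V * Vᵀ)).IsSymmetric :=
    isSymmetric_toEuclideanLin_iff.2 (isHermitian_mul_conjTranspose_self V)
  have hidem : IsIdempotentElem (toEuclideanLin (V * Vᵀ)) := by
    rw [IsIdempotentElem, Module.End.mul_eq_comp, ← toLpLin_mul_same,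
      (isIdempotentElem_mul_transpose hV).eq]
  have happly (v : EuclideanSpace ℝ m) :
      toEuclideanLin (V * Vᵀ) v = toLp 2 (V *ᵥ (Vᵀ *ᵥ v)) := by
    rw [toLpLin_apply, mulVec_mulVec]
  rw [← happly]
  exact hsymm.norm_sub_apply_le hidem x (by rw [happly, hb])

end Projection

section Taylor

variable {E : Type*} [NormedAddCommGroup E] [NormedSpace ℝ E] {y y' y'' : ℝ → E} {a b M : ℝ}

theorem norm_sub_sub_smul_deriv_right_le (hab : a ≤ b)
    (hy : ∀ t ∈ Icc a b, HasDerivWithinAt y (y' t) (Icc a b) t)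
    (hy' : ∀ t ∈ Icc a b, HasDerivWithinAt y' (y'' t) (Icc a b) t)
    (hM : ∀ t ∈ Icc a b, ‖y'' t‖ ≤ M) :
    ‖y b - y a - (b - a) • y' b‖ ≤ M * (b - a) ^ 2 / 2 := by
  have hy'_near (t : ℝ) (ht : t ∈ Icc a b) : ‖y' t - y' b‖ ≤ M * (b - t) := by
    have h := (convex_Icc a b).norm_image_sub_le_of_norm_hasDerivWithin_le hy' hM
      (right_mem_Icc.2 hab) ht
    rwa [Real.norm_eq_abs, abs_of_nonpos (by linarith [ht.2]), neg_sub] at h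
  -- fence `t ↦ y t - y a - (t - a) • y' b` by the primitive of `M (b - t)` vanishing at `a`
  have hderiv (t : ℝ) (ht : t ∈ Ico a b) : HasDerivWithinAt
      (fun t ↦ y t - y a - (t - a) • y' b) (y' t - y' b) (Ici t) t := by
    have hyt := (hy t (Ico_subset_Icc_self ht)).mono_of_mem_nhdsWithin (Icc_mem_nhdsGE_of_mem ht)
    have h := (hyt.sub_const (y a)).sub (((hasDerivWithinAt_id t _).sub_const a).smul_const (y' b))
    rwa [one_smul] at h
  have hfence (t : ℝ) :
      HasDerivAt (fun t ↦ M * ((b - a) ^ 2 - (b - t) ^ 2) / 2) (M * (b - t)) t := by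
    refine ((((((hasDerivAt_id t).const_sub b).pow 2).const_sub _).const_mul M).div_const 2
      ).congr_deriv ?_
    simp only [id, Nat.cast_ofNat]
    ring
  have h := image_norm_le_of_norm_deriv_right_le_deriv_boundary
    (fun t ht ↦ ((hy t ht).continuousWithinAt.sub continuousWithinAt_const).sub
      (((continuous_id.sub continuous_const).smul continuous_const).continuousWithinAt))
    hderiv (by simp) hfence (fun t ht ↦ hy'_near t (Ico_subset_Icc_self ht))
    (right_mem_Icc.2 hab)
  simpa using h

theorem norm_slope_sub_deriv_right_le (hab : a < b)
    (hy : ∀ t ∈ Icc a b, HasDerivWithinAt y (y' t) (Icc a b) t)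
    (hy' : ∀ t ∈ Icc a b, HasDerivWithinAt y' (y'' t) (Icc a b) t)
    (hM : ∀ t ∈ Icc a b, ‖y'' t‖ ≤ M) :
    ‖slope y a b - y' b‖ ≤ M * (b - a) / 2 := by
  have hba : 0 < b - a := sub_pos.2 hab
  have hrewrite : slope y a b - y' b = (b - a)⁻¹ • (y b - y a - (b - a) • y' b) := by
    rw [slope_def_module, smul_sub _ _ ((b - a) • y' b), inv_smul_smul₀ hba.ne']
  calc ‖slope y a b - y' b‖ ≤ (b - a)⁻¹ * (M * (b - a) ^ 2 / 2) := by
        rw [hrewrite, norm_smul, Real.norm_of_nonneg (inv_nonneg.2 hba.le)]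
        gcongr
        exact norm_sub_sub_smul_deriv_right_le hab.le hy hy' hM
    _ = M * (b - a) / 2 := by field_simp

end Taylor

theorem imexrb_consistency_general
    (Nh N : ℕ) (T : ℝ)
    (y y' y'' : ℝ → EuclideanSpace ℝ (Fin Nh))
    (hy' : ∀ t ∈ Set.Icc (0 : ℝ) T, HasDerivWithinAt y (y' t) (Set.Icc (0 : ℝ) T) t)
    (hy'' : ∀ t ∈ Set.Icc (0 : ℝ) T, HasDerivWithinAt y' (y'' t) (Set.Icc (0 : ℝ) T) t)
    (f : ℝ → EuclideanSpace ℝ (Fin Nh) → EuclideanSpace ℝ (Fin Nh))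
    (hode : ∀ t ∈ Set.Icc (0 : ℝ) T, y' t = f t (y t))
    (L : ℝ) (hL : 0 < L)
    (hLip : ∀ (t : ℝ) (x w : EuclideanSpace ℝ (Fin Nh)), ‖f t x - f t w‖ ≤ L * ‖x - w‖)
    (tn tn1 : ℝ) (htn : 0 ≤ tn) (htn1 : tn < tn1) (htn1T : tn1 ≤ T)
    (Δt : ℝ) (hΔt : Δt = tn1 - tn)
    (Vt : Matrix (Fin Nh) (Fin N) ℝ)
    (hVt : Vt.transpose * Vt = 1)
    (hproj : Vt.mulVec (Vt.transpose.mulVec (y tn)) = y tn)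
    (τ : EuclideanSpace ℝ (Fin Nh))
    (hτ : τ = Δt⁻¹ • (y tn1 - y tn) - f tn1 (WithLp.toLp 2 (Vt.mulVec (Vt.transpose.mulVec (y tn1)))))
    (My' My'' : ℝ)
    (hMy' : ∀ t ∈ Set.Icc (0 : ℝ) T, ‖y' t‖ ≤ My')
    (hMy'' : ∀ t ∈ Set.Icc (0 : ℝ) T, ‖y'' t‖ ≤ My'') :
    ‖τ‖ ≤ Δt * L * My' + (1 / 2) * (Δt + L * Δt ^ 2) * My'' := by
  have hsub : Icc tn tn1 ⊆ Icc (0 : ℝ) T := Icc_subset_Icc htn htn1T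
  have htn_mem : tn ∈ Icc (0 : ℝ) T := hsub (left_mem_Icc.2 htn1.le)
  have htn1_mem : tn1 ∈ Icc (0 : ℝ) T := hsub (right_mem_Icc.2 htn1.le)
  set P := WithLp.toLp 2 (Vt.mulVec (Vt.transpose.mulVec (y tn1)))
  have hslope : ‖slope y tn tn1 - y' tn1‖ ≤ My'' * Δt / 2 := by
    rw [hΔt]
    exact norm_slope_sub_deriv_right_le htn1 (fun t ht ↦ (hy' t (hsub ht)).mono hsub)
      (fun t ht ↦ (hy'' t (hsub ht)).mono hsub) (fun t ht ↦ hMy'' t (hsub ht))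
  have hstep : ‖y tn1 - y tn‖ ≤ My' * Δt := by
    have h := (convex_Icc (0 : ℝ) T).norm_image_sub_le_of_norm_hasDerivWithin_le hy' hMy'
      htn_mem htn1_mem
    rwa [Real.norm_of_nonneg (by linarith), ← hΔt] at h
  have hproj_err : ‖f tn1 (y tn1) - f tn1 P‖ ≤ L * (My' * Δt) :=
    (hLip tn1 _ _).trans <| mul_le_mul_of_nonneg_left
      ((norm_sub_mulVec_transpose_mulVec_le hVt (y tn1) (y tn) hproj).trans hstep) hL.le
  have hsplit : τ = (slope y tn tn1 - y' tn1) + (f tn1 (y tn1) - f tn1 P) := by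
    rw [hτ, hode tn1 htn1_mem, slope_def_module, hΔt]
    abel
  have hMy''_nonneg : 0 ≤ My'' := (norm_nonneg _).trans (hMy'' tn htn_mem)
  calc ‖τ‖ ≤ ‖slope y tn tn1 - y' tn1‖ + ‖f tn1 (y tn1) - f tn1 P‖ := hsplit ▸ norm_add_le _ _
    _ ≤ My'' * Δt / 2 + L * (My' * Δt) := add_le_add hslope hproj_err
    _ ≤ Δt * L * My' + (1 / 2) * (Δt + L * Δt ^ 2) * My'' := by
      linarith [mul_nonneg (mul_nonneg hL.le (sq_nonneg Δt)) hMy''_nonneg]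

/-- **Consistency of IMEX--RB (order 1).**
Let `y : [0,T] → ℝ^{N_h}` be twice continuously differentiable with `y′(t) = f(t, y(t))`,
`f` `L`-Lipschitz in its second argument, and let `Ṽ` have orthonormal columns with
`Ṽ Ṽᵀ y(tₙ) = y(tₙ)`.  Then the local truncation error
`τ = (y(t_{n+1}) − y(tₙ))/Δt − f(t_{n+1}, Ṽ Ṽᵀ y(t_{n+1}))` satisfies
`‖τ‖ ≤ Δt L max ‖y′‖ + ½ (Δt + L Δt²) max ‖y″‖`, so the scheme is consistent of order 1. -/
theorem imexrb_consistency
    (Nh N : ℕ) (T : ℝ) (hT : 0 < T)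
    (y y' y'' : ℝ → EuclideanSpace ℝ (Fin Nh))
    (hy' : ∀ t ∈ Set.Icc (0 : ℝ) T, HasDerivWithinAt y (y' t) (Set.Icc (0 : ℝ) T) t)
    (hy'' : ∀ t ∈ Set.Icc (0 : ℝ) T, HasDerivWithinAt y' (y'' t) (Set.Icc (0 : ℝ) T) t)
    (hy''cont : ContinuousOn y'' (Set.Icc (0 : ℝ) T))
    (f : ℝ → EuclideanSpace ℝ (Fin Nh) → EuclideanSpace ℝ (Fin Nh))
    (hode : ∀ t ∈ Set.Icc (0 : ℝ) T, y' t = f t (y t))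
    (L : ℝ) (hL : 0 < L)
    (hLip : ∀ (t : ℝ) (x w : EuclideanSpace ℝ (Fin Nh)), ‖f t x - f t w‖ ≤ L * ‖x - w‖)
    (tn tn1 : ℝ) (htn : 0 ≤ tn) (htn1 : tn < tn1) (htn1T : tn1 ≤ T)
    (Δt : ℝ) (hΔt : Δt = tn1 - tn)
    (Vt : Matrix (Fin Nh) (Fin N) ℝ)
    (hVt : Vt.transpose * Vt = 1)
    (hproj : Vt.mulVec (Vt.transpose.mulVec (y tn)) = y tn)
    (τ : EuclideanSpace ℝ (Fin Nh))
    (hτ : τ = Δt⁻¹ • (y tn1 - y tn) - f tn1 (WithLp.toLp 2 (Vt.mulVec (Vt.transpose.mulVec (y tn1)))))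
    (My' My'' : ℝ)
    (hMy' : ∀ t ∈ Set.Icc (0 : ℝ) T, ‖y' t‖ ≤ My')
    (hMy'' : ∀ t ∈ Set.Icc (0 : ℝ) T, ‖y'' t‖ ≤ My'') :
    ‖τ‖ ≤ Δt * L * My' + (1 / 2) * (Δt + L * Δt ^ 2) * My'' :=
  imexrb_consistency_general Nh N T y y' y'' hy' hy'' f hode L hL hLip tn tn1 htn htn1 htn1T Δt hΔt
    Vt hVt hproj τ hτ My' My'' hMy' hMy''
end

section
/- Let T > 0, let y : [0,T] → ℝ^{N_h} be twice continuously differentiable, let f : [0,T] × ℝ^{N_h} → ℝ^{N_h} satisfy y′(t) = f(t, y(t)) and be L-Lipschitz in its second argument. Let 0 ≤ t_n < t_{n+1} ≤ T, Δt := t_{n+1} − t_n, and suppose Δt·L < 1, y(t_n) ≠ 0, and u_n ∈ ℝ^{N_h} with u_n ≠ 0. Let u_{n+1} ∈ ℝ^{N_h} satisfy the IMEX--RB step with one-dimensional basis V = u_n/‖u_n‖: u_{n+1} = u_n + Δt f(t_{n+1}, (u_n u_nᵀ/‖u_n‖²) u_{n+1}). Define the errors e_n := y(t_n) − u_n, e_{n+1}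 := y(t_{n+1}) − u_{n+1}, the ratio C := ‖y(t_{n+1})‖/‖y(t_n)‖, and the local truncation error τ_{n+1} := (y(t_{n+1}) − y(t_n))/Δt − f(t_{n+1}, (y(t_n) y(t_n)ᵀ/‖y(t_n)‖²) y(t_{n+1})). Then ‖e_{n+1}‖ ≤ ((1 + 4 Δt C L)/(1 − Δt L)) ‖e_n‖ + (Δt/(1 − Δt L)) ‖τ_{n+1}‖. -/
/-!
Subtracting the scheme from the identity defining `τ` gives
`e_{n+1} = e_n + Δt τ + Δt (f(P_y y(t_{n+1})) - f(P_u u_{n+1}))`, with `P_y`, `P_u` the orthogonal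
projections onto the lines through `y(t_n)` and `u_n`. Normalised vectors move by at most
`2 ‖e_n‖ / ‖y(t_n)‖`, so `‖P_y - P_u‖ ≤ 4 ‖e_n‖ / ‖y(t_n)‖`; since `P_u` is a contraction,
`‖P_y y(t_{n+1}) - P_u u_{n+1}‖ ≤ 4 C ‖e_n‖ + ‖e_{n+1}‖`. The Lipschitz bound then gives an implicit
inequality for `‖e_{n+1}‖`, which can be solved because `Δt L < 1`.
-/

open scoped RealInnerProductSpace

theorem NormedSpace.norm_normalize_le {V : Type*} [NormedAddCommGroup V] [NormedSpace ℝ V]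
    (x : V) : ‖normalize x‖ ≤ 1 := by
  rw [normalize, norm_smul, norm_inv, norm_norm]
  exact inv_mul_le_one_of_le₀ le_rfl (norm_nonneg x)

theorem NormedSpace.norm_normalize_sub_normalize_le {V : Type*} [NormedAddCommGroup V]
    [NormedSpace ℝ V] {v : V} (hv : v ≠ 0) (u : V) :
    ‖normalize v - normalize u‖ ≤ 2 * ‖v - u‖ / ‖v‖ := by
  have hv₀ : 0 < ‖v‖ := norm_pos_iff.mpr hv
  have h₁ : ‖normalize v - ‖v‖⁻¹ • u‖ = ‖v - u‖ / ‖v‖ := by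
    rw [normalize, ← smul_sub, norm_smul, norm_inv, norm_norm, inv_mul_eq_div]
  have h₂ : ‖‖v‖⁻¹ • u - normalize u‖ ≤ ‖v - u‖ / ‖v‖ := by
    have hu : ‖v‖⁻¹ • u - normalize u = ‖v‖⁻¹ • ((‖u‖ - ‖v‖) • normalize u) := by
      rw [sub_smul, norm_smul_normalize, smul_sub, smul_smul, inv_mul_cancel₀ hv₀.ne', one_smul]
    rw [hu, norm_smul, norm_inv, norm_norm, inv_mul_eq_div, norm_smul, Real.norm_eq_abs,
      norm_sub_rev v u]
    gcongr
    calc |‖u‖ - ‖v‖| * ‖normalize u‖ ≤ |‖u‖ - ‖v‖| :=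
          mul_le_of_le_one_right (abs_nonneg _) (norm_normalize_le u)
      _ ≤ ‖u - v‖ := abs_norm_sub_norm_le u v
  calc ‖normalize v - normalize u‖
      ≤ ‖normalize v - ‖v‖⁻¹ • u‖ + ‖‖v‖⁻¹ • u - normalize u‖ :=
        norm_sub_le_norm_sub_add_norm_sub _ _ _
    _ ≤ 2 * ‖v - u‖ / ‖v‖ := by rw [h₁, mul_div_assoc]; linarith

section Projection

variable {E : Type*} [NormedAddCommGroup E] [InnerProductSpace ℝ E]

theorem norm_inner_smul_sub_inner_smul_le {a b : E} (ha : ‖a‖ ≤ 1) (hb : ‖b‖ ≤ 1) (x : E) :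
    ‖⟪b, x⟫ • b - ⟪a, x⟫ • a‖ ≤ 2 * ‖b - a‖ * ‖x‖ := by
  have hsplit : ⟪b, x⟫ • b - ⟪a, x⟫ • a = ⟪b - a, x⟫ • b + ⟪a, x⟫ • (b - a) := by
    rw [inner_sub_left, sub_smul, smul_sub]; abel
  calc ‖⟪b, x⟫ • b - ⟪a, x⟫ • a‖
      ≤ |⟪b - a, x⟫| * ‖b‖ + |⟪a, x⟫| * ‖b - a‖ := by
        rw [hsplit, ← Real.norm_eq_abs, ← Real.norm_eq_abs, ← norm_smul, ← norm_smul]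
        exact norm_add_le _ _
    _ ≤ ‖b - a‖ * ‖x‖ * 1 + 1 * ‖x‖ * ‖b - a‖ := by
        gcongr
        · exact abs_real_inner_le_norm _ _
        · exact (abs_real_inner_le_norm _ _).trans (by gcongr)
    _ = 2 * ‖b - a‖ * ‖x‖ := by ring

theorem Submodule.starProjection_singleton_eq_inner_normalize (v x : E) :
    (ℝ ∙ v).starProjection x = ⟪NormedSpace.normalize v, x⟫ • NormedSpace.normalize v := by
  rw [starProjection_singleton, NormedSpace.normalize, real_inner_smul_left, smul_smul,
    RCLike.ofReal_real_eq_id, id_eq]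
  congr 1
  ring

theorem Submodule.norm_starProjection_singleton_sub_le {v : E} (hv : v ≠ 0) (u x : E) :
    ‖(ℝ ∙ v).starProjection x - (ℝ ∙ u).starProjection x‖ ≤ 4 * ‖v - u‖ / ‖v‖ * ‖x‖ := by
  simp only [starProjection_singleton_eq_inner_normalize]
  calc _ ≤ 2 * ‖NormedSpace.normalize v - NormedSpace.normalize u‖ * ‖x‖ :=
        norm_inner_smul_sub_inner_smul_le (NormedSpace.norm_normalize_le u)
          (NormedSpace.norm_normalize_le v) x
    _ ≤ 2 * (2 * ‖v - u‖ / ‖v‖) * ‖x‖ := by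
        gcongr; exact NormedSpace.norm_normalize_sub_normalize_le hv u
    _ = 4 * ‖v - u‖ / ‖v‖ * ‖x‖ := by ring

end Projection

theorem EuclideanSpace.toLp_rankOne_mulVec {ι : Type*} [Fintype ι] (u x : EuclideanSpace ℝ ι) :
    (WithLp.toLp 2 (((‖u‖ ^ 2)⁻¹ • Matrix.vecMulVec u u).mulVec x) : EuclideanSpace ℝ ι)
      = (ℝ ∙ u).starProjection x := by
  rw [Submodule.starProjection_singleton]
  ext i
  simp [Matrix.mulVec, Matrix.vecMulVec, dotProduct, PiLp.inner_apply, Finset.mul_sum,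
    Finset.sum_mul, div_eq_inv_mul]
  exact Finset.sum_congr rfl fun j _ => by ring

theorem imexrb_one_step_error_bound_general
    (Nh : ℕ)
    (y : ℝ → EuclideanSpace ℝ (Fin Nh))
    (f : ℝ → EuclideanSpace ℝ (Fin Nh) → EuclideanSpace ℝ (Fin Nh))
    (L : ℝ)
    (hLip : ∀ (t : ℝ) (x w : EuclideanSpace ℝ (Fin Nh)), ‖f t x - f t w‖ ≤ L * ‖x - w‖)
    (tn tn1 : ℝ) (htn1 : tn < tn1)
    (Δt : ℝ) (hΔt : Δt = tn1 - tn) (hΔtL : Δt * L < 1)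
    (hyn : y tn ≠ 0)
    (un : EuclideanSpace ℝ (Fin Nh))
    (un1 : EuclideanSpace ℝ (Fin Nh))
    (hun1 : un1 = un + Δt • f tn1 ((WithLp.toLp 2 (((‖un‖ ^ 2)⁻¹ • Matrix.vecMulVec un un).mulVec un1) :
      EuclideanSpace ℝ (Fin Nh))))
    (en en1 : EuclideanSpace ℝ (Fin Nh))
    (hen : en = y tn - un) (hen1 : en1 = y tn1 - un1)
    (C : ℝ) (hC : C = ‖y tn1‖ / ‖y tn‖)
    (τ : EuclideanSpace ℝ (Fin Nh))
    (hτ : τ = Δt⁻¹ • (y tn1 - y tn) -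
      f tn1 ((WithLp.toLp 2 (((‖y tn‖ ^ 2)⁻¹ • Matrix.vecMulVec (y tn) (y tn)).mulVec (y tn1)) :
        EuclideanSpace ℝ (Fin Nh)))) :
    ‖en1‖ ≤ ((1 + 4 * Δt * C * L) / (1 - Δt * L)) * ‖en‖ + (Δt / (1 - Δt * L)) * ‖τ‖ := by
  have hΔt₀ : 0 < Δt := by rw [hΔt]; linarith
  have hL : 0 ≤ L := nonneg_of_mul_nonneg_left
    ((norm_nonneg _).trans (by simpa using hLip tn1 (y tn) 0)) (norm_pos_iff.mpr hyn)
  rw [EuclideanSpace.toLp_rankOne_mulVec] at hun1 hτ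
  set Pu := (ℝ ∙ un).starProjection un1
  set Py := (ℝ ∙ y tn).starProjection (y tn1)
  have herr : en1 = en + Δt • τ + Δt • (f tn1 Py - f tn1 Pu) := by
    rw [hen1, hen, hun1, hτ, smul_sub, smul_smul, mul_inv_cancel₀ hΔt₀.ne', one_smul, smul_sub]
    abel
  have hproj : ‖Py - Pu‖ ≤ 4 * C * ‖en‖ + ‖en1‖ := by
    have hsplit :
        Py - Pu = (Py - (ℝ ∙ un).starProjection (y tn1)) + (ℝ ∙ un).starProjection en1 := by
      rw [hen1, map_sub]; abel
    calc ‖Py - Pu‖ ≤ 4 * ‖y tn - un‖ / ‖y tn‖ * ‖y tn1‖ + ‖en1‖ := by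
          rw [hsplit]
          exact norm_add_le_of_le (Submodule.norm_starProjection_singleton_sub_le hyn _ _)
            (Submodule.norm_starProjection_apply_le _ _)
      _ = 4 * C * ‖en‖ + ‖en1‖ := by rw [hC, hen]; ring
  have hstep : ‖en1‖ ≤ ‖en‖ + Δt * ‖τ‖ + Δt * (L * ‖Py - Pu‖) := by
    calc ‖en1‖ ≤ ‖en‖ + ‖Δt • τ‖ + ‖Δt • (f tn1 Py - f tn1 Pu)‖ := herr ▸ norm_add₃_le
      _ ≤ ‖en‖ + Δt * ‖τ‖ + Δt * (L * ‖Py - Pu‖) := by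
          rw [norm_smul, norm_smul, Real.norm_of_nonneg hΔt₀.le]
          gcongr
          exact hLip _ _ _
  rw [div_mul_eq_mul_div, div_mul_eq_mul_div, ← add_div, le_div_iff₀ (by linarith)]
  linarith [mul_le_mul_of_nonneg_left hproj (mul_nonneg hΔt₀.le hL)]

/-- **One-step error recursion for IMEX--RB with one-dimensional basis.**
If `u_{n+1} = uₙ + Δt f(t_{n+1}, (uₙuₙᵀ/‖uₙ‖²) u_{n+1})` and `Δt L < 1`, the errors
`eₙ = y(tₙ) − uₙ`, `e_{n+1} = y(t_{n+1}) − u_{n+1}` satisfy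
`‖e_{n+1}‖ ≤ ((1 + 4 Δt C L)/(1 − Δt L)) ‖eₙ‖ + (Δt/(1 − Δt L)) ‖τ_{n+1}‖`, where
`C = ‖y(t_{n+1})‖/‖y(tₙ)‖` and `τ_{n+1}` is the local truncation error. -/
theorem imexrb_one_step_error_bound
    (Nh : ℕ) (T : ℝ) (hT : 0 < T)
    (y y' y'' : ℝ → EuclideanSpace ℝ (Fin Nh))
    (hy' : ∀ t ∈ Set.Icc (0 : ℝ) T, HasDerivWithinAt y (y' t) (Set.Icc (0 : ℝ) T) t)
    (hy'' : ∀ t ∈ Set.Icc (0 : ℝ) T, HasDerivWithinAt y' (y'' t) (Set.Icc (0 : ℝ) T) t)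
    (hy''cont : ContinuousOn y'' (Set.Icc (0 : ℝ) T))
    (f : ℝ → EuclideanSpace ℝ (Fin Nh) → EuclideanSpace ℝ (Fin Nh))
    (hode : ∀ t ∈ Set.Icc (0 : ℝ) T, y' t = f t (y t))
    (L : ℝ)
    (hLip : ∀ (t : ℝ) (x w : EuclideanSpace ℝ (Fin Nh)), ‖f t x - f t w‖ ≤ L * ‖x - w‖)
    (tn tn1 : ℝ) (htn : 0 ≤ tn) (htn1 : tn < tn1) (htn1T : tn1 ≤ T)
    (Δt : ℝ) (hΔt : Δt = tn1 - tn) (hΔtL : Δt * L < 1)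
    (hyn : y tn ≠ 0)
    (un : EuclideanSpace ℝ (Fin Nh)) (hun : un ≠ 0)
    (un1 : EuclideanSpace ℝ (Fin Nh))
    (hun1 : un1 = un + Δt • f tn1 ((WithLp.toLp 2 (((‖un‖ ^ 2)⁻¹ • Matrix.vecMulVec un un).mulVec un1) :
      EuclideanSpace ℝ (Fin Nh))))
    (en en1 : EuclideanSpace ℝ (Fin Nh))
    (hen : en = y tn - un) (hen1 : en1 = y tn1 - un1)
    (C : ℝ) (hC : C = ‖y tn1‖ / ‖y tn‖)
    (τ : EuclideanSpace ℝ (Fin Nh))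
    (hτ : τ = Δt⁻¹ • (y tn1 - y tn) -
      f tn1 ((WithLp.toLp 2 (((‖y tn‖ ^ 2)⁻¹ • Matrix.vecMulVec (y tn) (y tn)).mulVec (y tn1)) :
        EuclideanSpace ℝ (Fin Nh)))) :
    ‖en1‖ ≤ ((1 + 4 * Δt * C * L) / (1 - Δt * L)) * ‖en‖ + (Δt / (1 - Δt * L)) * ‖τ‖ :=
  imexrb_one_step_error_bound_general Nh y f L hLip tn tn1 htn1 Δt hΔt hΔtL hyn un un1 hun1 en en1
    hen hen1 C hC τ hτ
end

section
/- Let T > 0, let y : [0,T] → ℝ^{N_h} be twice continuously differentiable with y(t) ≠ 0 for all t ∈ [0,T], and let f : [0,T] × ℝ^{N_h} → ℝ^{N_h} satisfy y′(t) = f(t, y(t)) for all t and be L-Lipschitz continuous in its second argument. There exists a constant K > 0, depending only on T, L, min_{[0,T]}‖y‖, max_{[0,T]}‖y‖, max_{[0,T]}‖y′‖ and max_{[0,T]}‖y″‖ (but not on Δt or n), such that the following holds: for every N_t ∈ ℕ with Δt := T/N_t satisfying Δt·L < 1, if the sequence (u_n)_{n=0}^{N_t} ⊂ ℝ^{N_h}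 is defined by u_0 = y(0), u_n ≠ 0 for all n, and u_{n+1} = u_n + Δt f(t_{n+1}, (u_n u_nᵀ/‖u_n‖²) u_{n+1}) with t_n = nΔt, then ‖y(t_n) − u_n‖ ≤ K·Δt for all 0 ≤ n ≤ N_t. That is, the IMEX--RB method is convergent of order 1. -/
/-! With `P` the orthogonal projection onto a subspace containing `uₙ`, the scheme is backward
Euler except that `f` is evaluated at `P uₙ₊₁`. Since `P` is a contraction and `P z` is the best
approximation of `z` in its range, `‖y(tₙ₊₁) − P uₙ₊₁‖ ≤ eₙ₊₁ + ‖y(tₙ₊₁) − uₙ‖ ≤ eₙ₊₁ + eₙ + O(Δt)`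
for the errors `eₙ = ‖y(tₙ) − uₙ‖`. Together with the `O(Δt²)` Taylor remainder this gives
`(1 − ΔtL) eₙ₊₁ ≤ (1 + ΔtL) eₙ + CΔt²`, so by the discrete Gronwall inequality
`eₙ ≤ ((1 + ΔtL)/(1 − ΔtL))^{N_t} · TC/(1 − ΔtL) · Δt`. The factor in front of `Δt` is at most
`2TC e^{4TL}` once `ΔtL ≤ 1/2`, and only finitely many `N_t` have `ΔtL > 1/2`. -/

open Set Filter
open scoped RealInnerProductSpace NNReal

theorem Submodule.norm_sub_starProjection_le_norm_sub_add {E : Type*} [NormedAddCommGroup E]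
    [InnerProductSpace ℝ E] (K : Submodule ℝ E) [K.HasOrthogonalProjection] {u : E} (hu : u ∈ K)
    (z v : E) : ‖z - K.starProjection v‖ ≤ ‖z - v‖ + ‖z - u‖ := by
  have hz : ‖z - K.starProjection z‖ ≤ ‖z - u‖ := by
    rw [starProjection_minimal]
    exact ciInf_le ⟨0, forall_mem_range.mpr fun _ => norm_nonneg _⟩ (⟨u, hu⟩ : K)
  calc ‖z - K.starProjection v‖ = ‖K.starProjection (z - v) + (z - K.starProjection z)‖ := by
        rw [map_sub]; abel_nf
    _ ≤ ‖z - v‖ + ‖z - u‖ :=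
        (norm_add_le _ _).trans (add_le_add (K.norm_starProjection_apply_le _) hz)

theorem EuclideanSpace.toLp_vecMulVec_self_mulVec_eq_starProjection {n : ℕ}
    (u v : EuclideanSpace ℝ (Fin n)) :
    (WithLp.toLp 2 (((‖u‖ ^ 2)⁻¹ • Matrix.vecMulVec u u).mulVec v) : EuclideanSpace ℝ (Fin n))
      = (ℝ ∙ u).starProjection v := by
  rw [Matrix.smul_mulVec, Matrix.vecMulVec_mulVec, Submodule.starProjection_singleton,
    EuclideanSpace.inner_eq_star_dotProduct, dotProduct_comm]
  ext i
  simp [div_eq_inv_mul]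
  ring

theorem norm_sub_sub_smul_le_of_hasDerivWithinAt {E : Type*} [NormedAddCommGroup E]
    [NormedSpace ℝ E] {y y' y'' : ℝ → E} {a b M : ℝ} (hab : a ≤ b)
    (hy' : ∀ t ∈ Icc a b, HasDerivWithinAt y (y' t) (Icc a b) t)
    (hy'' : ∀ t ∈ Icc a b, HasDerivWithinAt y' (y'' t) (Icc a b) t)
    (hM : ∀ t ∈ Icc a b, ‖y'' t‖ ≤ M) :
    ‖y b - y a - (b - a) • y' b‖ ≤ M * (b - a) ^ 2 := by
  have hb : b ∈ Icc a b := right_mem_Icc.mpr hab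
  have hM0 : 0 ≤ M := (norm_nonneg _).trans (hM b hb)
  have hy'_var : ∀ t ∈ Icc a b, ‖y' t - y' b‖ ≤ M * (b - a) := fun t ht => by
    have := (convex_Icc a b).norm_image_sub_le_of_norm_hasDerivWithin_le hy'' hM hb ht
    rw [Real.norm_eq_abs, abs_sub_comm, abs_of_nonneg (sub_nonneg.mpr ht.2)] at this
    exact this.trans (by gcongr; linarith [ht.1])
  have hg : ∀ t ∈ Icc a b,
      HasDerivWithinAt (fun s => y s - s • y' b) (y' t - y' b) (Icc a b) t := fun t ht =>
    (hy' t ht).sub (by simpa using (hasDerivWithinAt_id t (Icc a b)).smul_const (y' b))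
  have := (convex_Icc a b).norm_image_sub_le_of_norm_hasDerivWithin_le hg hy'_var
    (left_mem_Icc.mpr hab) hb
  rw [Real.norm_eq_abs, abs_of_nonneg (sub_nonneg.mpr hab)] at this
  calc ‖y b - y a - (b - a) • y' b‖ = ‖(y b - b • y' b) - (y a - a • y' b)‖ := by
        rw [sub_smul]; abel_nf
    _ ≤ M * (b - a) ^ 2 := by linarith

theorem one_sub_mul_norm_sub_le_of_projected_euler_step {E : Type*} [NormedAddCommGroup E]
    [InnerProductSpace ℝ E] (K : Submodule ℝ E) [K.HasOrthogonalProjection] {g : E → E} {L : ℝ≥0}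
    (hg : LipschitzWith L g) {h τ δ : ℝ} (hh : 0 ≤ h) {u u' z z' : E} (hu : u ∈ K)
    (hstep : u' = u + h • g (K.starProjection u'))
    (hτ : ‖z' - z - h • g z'‖ ≤ τ) (hδ : ‖z' - z‖ ≤ δ) :
    (1 - h * L) * ‖z' - u'‖ ≤ (1 + h * L) * ‖z - u‖ + τ + h * L * δ := by
  have hg_diff : ‖g z' - g (K.starProjection u')‖ ≤ L * (‖z' - u'‖ + δ + ‖z - u‖) :=
    calc ‖g z' - g (K.starProjection u')‖ ≤ L * ‖z' - K.starProjection u'‖ := hg.norm_sub_le _ _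
      _ ≤ L * (‖z' - u'‖ + ‖z' - u‖) := by
        gcongr; exact K.norm_sub_starProjection_le_norm_sub_add hu _ _
      _ ≤ L * (‖z' - u'‖ + δ + ‖z - u‖) := mul_le_mul_of_nonneg_left
          (by linarith [norm_sub_le_norm_sub_add_norm_sub z' z u]) L.2
  have : ‖z' - u'‖ ≤ τ + ‖z - u‖ + h * (L * (‖z' - u'‖ + δ + ‖z - u‖)) :=
    calc ‖z' - u'‖ = ‖(z' - z - h • g z') + (z - u) + h • (g z' - g (K.starProjection u'))‖ := by
          conv_lhs => rw [hstep]
          rw [smul_sub]; abel_nf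
      _ ≤ ‖z' - z - h • g z'‖ + ‖z - u‖ + h * ‖g z' - g (K.starProjection u')‖ :=
          norm_add₃_le.trans_eq (by rw [norm_smul, Real.norm_of_nonneg hh])
      _ ≤ τ + ‖z - u‖ + h * (L * (‖z' - u'‖ + δ + ‖z - u‖)) := by gcongr
  linear_combination this

theorem one_sub_mul_norm_sub_le_of_projected_euler_step_of_hasDerivWithinAt {E : Type*}
    [NormedAddCommGroup E] [InnerProductSpace ℝ E] (K : Submodule ℝ E) [K.HasOrthogonalProjection]
    {y y' y'' : ℝ → E} {g : E → E} {L : ℝ≥0} {a b h M₁ M₂ : ℝ} (hh : 0 ≤ h) (hab : b - a = h)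
    (hy' : ∀ t ∈ Icc a b, HasDerivWithinAt y (y' t) (Icc a b) t)
    (hy'' : ∀ t ∈ Icc a b, HasDerivWithinAt y' (y'' t) (Icc a b) t)
    (hM₁ : ∀ t ∈ Icc a b, ‖y' t‖ ≤ M₁) (hM₂ : ∀ t ∈ Icc a b, ‖y'' t‖ ≤ M₂)
    (hyg : y' b = g (y b)) (hg : LipschitzWith L g) {u u' : E} (hu : u ∈ K)
    (hstep : u' = u + h • g (K.starProjection u')) :
    (1 - h * L) * ‖y b - u'‖ ≤ (1 + h * L) * ‖y a - u‖ + (L * M₁ + M₂) * h ^ 2 := by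
  have hab' : a ≤ b := by linarith
  have hτ := norm_sub_sub_smul_le_of_hasDerivWithinAt hab' hy' hy'' hM₂
  have hδ := (convex_Icc a b).norm_image_sub_le_of_norm_hasDerivWithin_le hy' hM₁
    (left_mem_Icc.mpr hab') (right_mem_Icc.mpr hab')
  rw [hab, hyg] at hτ
  rw [hab, Real.norm_of_nonneg hh] at hδ
  linear_combination one_sub_mul_norm_sub_le_of_projected_euler_step K hg hh hu hstep hτ hδ

theorem le_pow_mul_of_le_mul_add {e : ℕ → ℝ} {ρ D : ℝ} {N : ℕ} (hρ : 1 ≤ ρ) (hD : 0 ≤ D)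
    (he0 : e 0 ≤ 0) (he : ∀ n < N, e (n + 1) ≤ ρ * e n + D) : ∀ n ≤ N, e n ≤ ρ ^ n * (n * D) := by
  intro n hn
  induction n with
  | zero => simpa using he0
  | succ n ih =>
    calc e (n + 1) ≤ ρ * e n + D := he n hn
      _ ≤ ρ * (ρ ^ n * (n * D)) + ρ ^ (n + 1) * D :=
          add_le_add (by gcongr; exact ih (by omega)) (le_mul_of_one_le_left hD (one_le_pow₀ hρ))
      _ = ρ ^ (n + 1) * ((n + 1 : ℕ) * D) := by push_cast; ring

theorem le_of_one_sub_mul_le_one_add_mul_add {e : ℕ → ℝ} {x D : ℝ} {N : ℕ} (hx : 0 ≤ x)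
    (hx1 : x < 1) (hD : 0 ≤ D) (he0 : e 0 ≤ 0)
    (he : ∀ n < N, (1 - x) * e (n + 1) ≤ (1 + x) * e n + D) {n : ℕ} (hn : n ≤ N) :
    e n ≤ ((1 + x) / (1 - x)) ^ N * (N * (D / (1 - x))) := by
  have h1x : 0 < 1 - x := by linarith
  have hρ : 1 ≤ (1 + x) / (1 - x) := by rw [le_div_iff₀ h1x]; linarith
  have hexplicit : ∀ n < N, e (n + 1) ≤ (1 + x) / (1 - x) * e n + D / (1 - x) := fun n hn => by
    rw [div_mul_eq_mul_div, ← add_div, le_div_iff₀ h1x, mul_comm]; exact he n hn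
  calc e n ≤ ((1 + x) / (1 - x)) ^ n * (n * (D / (1 - x))) :=
        le_pow_mul_of_le_mul_add hρ (by positivity) he0 hexplicit n hn
    _ ≤ ((1 + x) / (1 - x)) ^ N * (N * (D / (1 - x))) := by gcongr

noncomputable def eulerErrorBound (T L C : ℝ) (N : ℕ) : ℝ :=
  ((1 + T / N * L) / (1 - T / N * L)) ^ N * (T * C / (1 - T / N * L))

theorem le_eulerErrorBound_mul {e : ℕ → ℝ} {T L C : ℝ} {N : ℕ} (hT : 0 ≤ T) (hL : 0 ≤ L)
    (hC : 0 ≤ C) (hNL : T / N * L < 1) (he0 : e 0 ≤ 0)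
    (he : ∀ n < N, (1 - T / N * L) * e (n + 1) ≤ (1 + T / N * L) * e n + C * (T / N) ^ 2)
    {n : ℕ} (hn : n ≤ N) : e n ≤ eulerErrorBound T L C N * (T / N) := by
  refine (le_of_one_sub_mul_le_one_add_mul_add (by positivity) hNL (by positivity) he0 he
    hn).trans_eq ?_
  rw [eulerErrorBound]
  field_simp

theorem bddAbove_range_eulerErrorBound {T L C : ℝ} (hT : 0 ≤ T) (hL : 0 ≤ L) (hC : 0 ≤ C) :
    BddAbove (range (eulerErrorBound T L C)) := by
  refine IsBoundedUnder.bddAbove_range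
    (isBoundedUnder_of_eventually_le (a := Real.exp (4 * T * L) * (2 * T * C)) ?_)
  filter_upwards [eventually_ge_atTop ⌈2 * T * L⌉₊, eventually_gt_atTop 0] with N hN hN0
  have hN' : 2 * T * L ≤ N := Nat.ceil_le.mp hN
  have hNpos : (0 : ℝ) < N := by exact_mod_cast hN0
  unfold eulerErrorBound
  set x := T / N * L with hx
  have hx0 : 0 ≤ x := by positivity
  have hx_half : x ≤ 1 / 2 := by
    rw [hx, div_mul_eq_mul_div, div_le_iff₀ hNpos]; linarith
  have hρ : (1 + x) / (1 - x) ≤ Real.exp (4 * x) := by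
    calc (1 + x) / (1 - x) ≤ 4 * x + 1 := by rw [div_le_iff₀ (by linarith)]; nlinarith
      _ ≤ Real.exp (4 * x) := Real.add_one_le_exp _
  have hpow : ((1 + x) / (1 - x)) ^ N ≤ Real.exp (4 * T * L) := by
    calc ((1 + x) / (1 - x)) ^ N ≤ Real.exp (4 * x) ^ N := by
          gcongr; rw [le_div_iff₀ (by linarith)]; linarith
      _ = Real.exp (4 * T * L) := by
          rw [← Real.exp_nat_mul, hx]; congr 1; field_simp
  have hfac : T * C / (1 - x) ≤ 2 * T * C := by
    rw [div_le_iff₀ (by linarith)]; nlinarith [mul_nonneg hT hC]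
  exact mul_le_mul hpow hfac (div_nonneg (by positivity) (by linarith)) (by positivity)

theorem imexrb_convergence_general
    (Nh : ℕ) (T : ℝ) (hT : 0 < T)
    (y y' y'' : ℝ → EuclideanSpace ℝ (Fin Nh))
    (hy' : ∀ t ∈ Set.Icc (0 : ℝ) T, HasDerivWithinAt y (y' t) (Set.Icc (0 : ℝ) T) t)
    (hy'' : ∀ t ∈ Set.Icc (0 : ℝ) T, HasDerivWithinAt y' (y'' t) (Set.Icc (0 : ℝ) T) t)
    (hy''cont : ContinuousOn y'' (Set.Icc (0 : ℝ) T))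
    (f : ℝ → EuclideanSpace ℝ (Fin Nh) → EuclideanSpace ℝ (Fin Nh))
    (hode : ∀ t ∈ Set.Icc (0 : ℝ) T, y' t = f t (y t))
    (L : ℝ)
    (hLip : ∀ (t : ℝ) (x w : EuclideanSpace ℝ (Fin Nh)), ‖f t x - f t w‖ ≤ L * ‖x - w‖) :
    ∃ K > (0 : ℝ), ∀ (Nt : ℕ), 0 < Nt → ∀ Δt : ℝ, Δt = T / Nt → Δt * L < 1 →
      ∀ u : ℕ → EuclideanSpace ℝ (Fin Nh),
        u 0 = y 0 →
        (∀ n ≤ Nt, u n ≠ 0) →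
        (∀ n < Nt, u (n + 1) = u n + Δt •
          f ((n + 1 : ℕ) * Δt)
            ((WithLp.toLp 2 (((‖u n‖ ^ 2)⁻¹ • Matrix.vecMulVec (u n) (u n)).mulVec (u (n + 1))) :
              EuclideanSpace ℝ (Fin Nh)))) →
        ∀ n ≤ Nt, ‖y (n * Δt) - u n‖ ≤ K * Δt := by
  have h0T : (0 : ℝ) ∈ Icc 0 T := left_mem_Icc.mpr hT.le
  obtain ⟨M1, hM1⟩ := isCompact_Icc.exists_bound_of_continuousOn
    (fun t ht => (hy'' t ht).continuousWithinAt : ContinuousOn y' (Icc 0 T))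
  obtain ⟨M2, hM2⟩ := isCompact_Icc.exists_bound_of_continuousOn hy''cont
  set L' : ℝ≥0 := L.toNNReal
  set C := L' * M1 + M2
  have hC : 0 ≤ C := by
    have := (norm_nonneg _).trans (hM1 0 h0T)
    have := (norm_nonneg _).trans (hM2 0 h0T)
    positivity
  obtain ⟨K, hK⟩ := bddAbove_range_eulerErrorBound hT.le L'.2 hC
  refine ⟨max K 1, by positivity, ?_⟩
  rintro Nt hNt Δt rfl hΔtL u hu0 _ hstep n hn
  have hΔtL' : T / Nt * L' < 1 := by
    rw [Real.coe_toNNReal', mul_max_of_nonneg _ _ (by positivity), mul_zero]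
    exact max_lt hΔtL one_pos
  have hLip' : ∀ t, LipschitzWith L' (f t) := fun t =>
    LipschitzWith.of_dist_le' fun x w => by simpa only [dist_eq_norm] using hLip t x w
  have htime : ∀ m ≤ Nt, (m : ℝ) * (T / Nt) ∈ Icc 0 T := fun m hm => by
    refine ⟨by positivity, ?_⟩
    calc (m : ℝ) * (T / Nt) ≤ Nt * (T / Nt) := by gcongr
      _ = T := by field_simp
  have hlocal : ∀ m < Nt, (1 - T / Nt * L') * ‖y ((m + 1 : ℕ) * (T / Nt)) - u (m + 1)‖
      ≤ (1 + T / Nt * L') * ‖y (m * (T / Nt)) - u m‖ + C * (T / Nt) ^ 2 := fun m hm => by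
    have hsub : Icc ((m : ℝ) * (T / Nt)) ((m + 1 : ℕ) * (T / Nt)) ⊆ Icc 0 T :=
      Icc_subset_Icc (htime m hm.le).1 (htime (m + 1) hm).2
    exact one_sub_mul_norm_sub_le_of_projected_euler_step_of_hasDerivWithinAt (ℝ ∙ u m)
      (by positivity) (by push_cast; ring) (fun t ht => (hy' t (hsub ht)).mono hsub)
      (fun t ht => (hy'' t (hsub ht)).mono hsub) (fun t ht => hM1 t (hsub ht))
      (fun t ht => hM2 t (hsub ht)) (hode _ (htime _ hm)) (hLip' _)
      (Submodule.mem_span_singleton_self _)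
      (by rw [← EuclideanSpace.toLp_vecMulVec_self_mulVec_eq_starProjection]; exact hstep m hm)
  calc ‖y (n * (T / Nt)) - u n‖ ≤ eulerErrorBound T L' C Nt * (T / Nt) :=
        le_eulerErrorBound_mul (e := fun m => ‖y (m * (T / Nt)) - u m‖) hT.le L'.2 hC hΔtL'
          (by simp [hu0]) hlocal hn
    _ ≤ max K 1 * (T / Nt) := by
        gcongr
        exact (hK (mem_range_self Nt)).trans (le_max_left _ _)

/-- **Convergence of IMEX--RB (order 1).**
Under the regularity, non-vanishing and Lipschitz assumptions, there is a constant `K > 0`,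
independent of `Δt` and `n`, such that for every number of timesteps `N_t` with
`Δt = T/N_t` and `Δt L < 1`, the IMEX--RB iterates with one-dimensional basis
`uₙ/‖uₙ‖` satisfy `‖y(tₙ) − uₙ‖ ≤ K Δt` for all `0 ≤ n ≤ N_t`. -/
theorem imexrb_convergence
    (Nh : ℕ) (T : ℝ) (hT : 0 < T)
    (y y' y'' : ℝ → EuclideanSpace ℝ (Fin Nh))
    (hy' : ∀ t ∈ Set.Icc (0 : ℝ) T, HasDerivWithinAt y (y' t) (Set.Icc (0 : ℝ) T) t)
    (hy'' : ∀ t ∈ Set.Icc (0 : ℝ) T, HasDerivWithinAt y' (y'' t) (Set.Icc (0 : ℝ) T) t)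
    (hy''cont : ContinuousOn y'' (Set.Icc (0 : ℝ) T))
    (hynz : ∀ t ∈ Set.Icc (0 : ℝ) T, y t ≠ 0)
    (f : ℝ → EuclideanSpace ℝ (Fin Nh) → EuclideanSpace ℝ (Fin Nh))
    (hode : ∀ t ∈ Set.Icc (0 : ℝ) T, y' t = f t (y t))
    (L : ℝ)
    (hLip : ∀ (t : ℝ) (x w : EuclideanSpace ℝ (Fin Nh)), ‖f t x - f t w‖ ≤ L * ‖x - w‖) :
    ∃ K > (0 : ℝ), ∀ (Nt : ℕ), 0 < Nt → ∀ Δt : ℝ, Δt = T / Nt → Δt * L < 1 →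
      ∀ u : ℕ → EuclideanSpace ℝ (Fin Nh),
        u 0 = y 0 →
        (∀ n ≤ Nt, u n ≠ 0) →
        (∀ n < Nt, u (n + 1) = u n + Δt •
          f ((n + 1 : ℕ) * Δt)
            ((WithLp.toLp 2 (((‖u n‖ ^ 2)⁻¹ • Matrix.vecMulVec (u n) (u n)).mulVec (u (n + 1))) :
              EuclideanSpace ℝ (Fin Nh)))) →
        ∀ n ≤ Nt, ‖y (n * Δt) - u n‖ ≤ K * Δt :=
  imexrb_convergence_general Nh T hT y y' y'' hy' hy'' hy''cont f hode L hLip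
end
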